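/- Let A = T(V)/(R) be a quadratic algebra and p ≥ 2 not divisible by char(k). Then HK^hi_p(A)_0 ≅ 0: the map ∂_⌢: HK_p(A)_0 → HK_{p−1}(A)_1 induced by e_A ⌢_K − is injective. -/

import Mathlib

/- STATEMENT 13: Let `A = T(V)/(R)` be a quadratic algebra and `p ≥ 2` not divisible by
`char k`.  Then `HK^hi_p(A)_0 ≅ 0`: the map `∂⌢ : HK_p(A)_0 → HK_{p−1}(A)_1` induced by
`e_A ⌢K −` is injective.  Concretely, `HK_p(A)_0 = ker(b_K : W_p → V ⊗ W_{p−1})`, where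
`b_K` is the restriction to `W_p` of `1 − τ` with
`τ(v_1⊗…⊗v_p) = (−1)^{p−1} v_p⊗v_1⊗…⊗v_{p−1}`, `∂⌢(z) = [z]`, and the boundaries in
biweight `(p−1,1)` are the image of `(1 − τ)|_{W_p}`; injectivity of `∂⌢` says that a cycle
`z ∈ W_p` with `(1−τ)z = 0` which is a boundary must vanish. -/

open TensorProduct PiTensorProduct

variable (k : Type*) [Field k] (V : Type*) [AddCommGroup V] [Module k V]

open TensorProduct PiTensorProduct

variable (k : Type*) [Field k] (V : Type*) [AddCommGroup V] [Module k V]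

/-- The canonical equivalence `V^{⊗i} ⊗ V^{⊗j} ≃ V^{⊗(i+j)}`. -/
noncomputable def tpMul (i j : ℕ) : ((⨂[k]^i V) ⊗[k] (⨂[k]^j V)) ≃ₗ[k] ⨂[k]^(i + j) V :=
  (PiTensorProduct.tmulEquiv (ι := Fin i) (ι₂ := Fin j) k V).trans
    (PiTensorProduct.reindex k (fun _ => V) finSumFinEquiv)

variable {k V}

/-- The subspace `S ⊗ T` of `V^{⊗(i+j)}` attached to subspaces `S ⊆ V^{⊗i}`, `T ⊆ V^{⊗j}`. -/
noncomputable def sprod {i j : ℕ} (S : Submodule k (⨂[k]^i V)) (T : Submodule k (⨂[k]^j V)) :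
    Submodule k (⨂[k]^(i + j) V) :=
  Submodule.map (tpMul k V i j).toLinearMap (Submodule.map₂ (TensorProduct.mk k _ _) S T)

/-- Transport of subspaces of tensor powers along an equality of exponents. -/
noncomputable def scast {i j : ℕ} (h : i = j) (S : Submodule k (⨂[k]^i V)) :
    Submodule k (⨂[k]^j V) :=
  Submodule.map (PiTensorProduct.reindex k (fun _ => V) (finCongr h)).toLinearMap S

/-- The identification `V^{⊗1} ≃ V`. -/
noncomputable def e1 : (⨂[k]^1 V) ≃ₗ[k] V := PiTensorProduct.subsingletonEquiv (0 : Fin 1)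

/-- The identification `V^{⊗2} ≃ V ⊗ V`. -/
noncomputable def e2 : (⨂[k]^2 V) ≃ₗ[k] (V ⊗[k] V) :=
  (tpMul k V 1 1).symm.trans (TensorProduct.congr e1 e1)

/-- The Koszul subspaces `W p = ⋂_{i+2+j=p} V^{⊗i} ⊗ R ⊗ V^{⊗j}`; the intersection is empty
for `p = 0, 1`, so `W 0` and `W 1` are the whole ambient spaces (`k` resp. `V`). -/
noncomputable def W (R : Submodule k (V ⊗[k] V)) (p : ℕ) : Submodule k (⨂[k]^p V) :=
  ⨅ (i : ℕ), ⨅ (j : ℕ), ⨅ (_ : i + 2 + j = p),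
    scast (show i + (2 + j) = p by omega)
      (sprod (⊤ : Submodule k (⨂[k]^i V))
        (sprod (Submodule.map (e2 (k := k) (V := V)).symm.toLinearMap R)
          (⊤ : Submodule k (⨂[k]^j V))))


variable (k V)

/-- The signed cyclic permutation `τ(v_1⊗…⊗v_p) = (−1)^{p−1} v_p⊗v_1⊗…⊗v_{p−1}`. -/
noncomputable def tauCyc (p : ℕ) : (⨂[k]^p V) →ₗ[k] ⨂[k]^p V :=
  ((-1 : k) ^ (p - 1)) • (PiTensorProduct.reindex k (fun _ : Fin p => V) (finRotate p)).toLinearMap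

variable {k V}


theorem finRotate_pow_self (n : ℕ) : finRotate n ^ n = 1 := by
  rcases lt_or_ge n 2 with hn | hn
  · interval_cases n <;> exact Subsingleton.elim _ _
  · rw [← orderOf_dvd_iff_pow_eq_one, ← Equiv.Perm.lcm_cycleType, cycleType_finRotate_of_le hn]
    simp

theorem PiTensorProduct.reindex_pow {R ι M : Type*} [CommSemiring R] [AddCommMonoid M]
    [Module R M] (e : Equiv.Perm ι) (n : ℕ) :
    (reindex R (fun _ : ι => M) e).toLinearMap ^ n =
      (reindex R (fun _ : ι => M) (e ^ n)).toLinearMap := by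
  induction n with
  | zero => ext; simp [Equiv.Perm.one_def]
  | succ n ih =>
    rw [pow_succ, ih, pow_succ, Equiv.Perm.mul_def, ← reindex_trans]
    rfl

theorem tauCyc_pow_self (p : ℕ) : tauCyc k V p ^ p = 1 := by
  have hsign : ((-1 : k) ^ (p - 1)) ^ p = 1 := by
    rw [← pow_mul, mul_comm]
    exact (Nat.even_mul_pred_self p).neg_one_pow
  rw [tauCyc, smul_pow, PiTensorProduct.reindex_pow, finRotate_pow_self, hsign, one_smul]
  ext; simp [Equiv.Perm.one_def]

/- `∑_{i<n} T^i` annihilates the range of `1 - T` (as `T^n = 1`) and acts as `n` on the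
kernel of `1 - T`. -/
theorem Module.End.disjoint_ker_range_one_sub_of_pow_eq_one {R M : Type*} [Ring R]
    [AddCommGroup M] [Module R M] {T : Module.End R M} {n : ℕ} (hT : T ^ n = 1)
    (hn : IsUnit (n : R)) : Disjoint (LinearMap.ker (1 - T)) (LinearMap.range (1 - T)) := by
  rw [Submodule.disjoint_def]
  rintro _ hz ⟨w, rfl⟩
  set z := (1 - T) w
  have hfix : ∀ i, (T ^ i) z = z := fun i => by
    rw [Module.End.pow_apply, Function.iterate_fixed (sub_eq_zero.mp hz).symm]
  have hnz : (n : R) • z = 0 := calc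
    (n : R) • z = (∑ i ∈ Finset.range n, T ^ i) z := by
      simp [LinearMap.sum_apply, hfix, Nat.cast_smul_eq_nsmul]
    _ = ((∑ i ∈ Finset.range n, T ^ i) * (1 - T)) w := rfl
    _ = 0 := by rw [geom_sum_mul_neg, hT, sub_self, LinearMap.zero_apply]
  exact hn.smul_eq_zero.mp hnz

theorem higher_koszul_homology_weight_zero_injective_general (R : Submodule k (V ⊗[k] V))
    (p : ℕ) (hpchar : (p : k) ≠ 0) :
    ∀ z ∈ W R p, ((LinearMap.id : (⨂[k]^p V) →ₗ[k] ⨂[k]^p V) - tauCyc k V p) z = 0 →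
      z ∈ Submodule.map ((LinearMap.id : (⨂[k]^p V) →ₗ[k] ⨂[k]^p V) - tauCyc k V p) (W R p) → z = 0 := by
  rintro z - hz ⟨w, -, rfl⟩
  exact Submodule.disjoint_def.mp
    (Module.End.disjoint_ker_range_one_sub_of_pow_eq_one (tauCyc_pow_self p) hpchar.isUnit)
    _ hz ⟨w, rfl⟩

theorem higher_koszul_homology_weight_zero_injective (R : Submodule k (V ⊗[k] V))
    (p : ℕ) (hp2 : 2 ≤ p) (hpchar : (p : k) ≠ 0) :
    ∀ z ∈ W R p, ((LinearMap.id : (⨂[k]^p V) →ₗ[k] ⨂[k]^p V) - tauCyc k V p) z = 0 →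
      z ∈ Submodule.map ((LinearMap.id : (⨂[k]^p V) →ₗ[k] ⨂[k]^p V) - tauCyc k V p) (W R p) → z = 0 :=
  higher_koszul_homology_weight_zero_injective_general R p hpchar
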